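/- arXiv:1809.09025 — 7 statements merged into one kernel-verified Lean document; each statement's English description precedes it below -/
import Mathlib

section
/- (Theorem 1: uniqueness of the gas-flow solution) Suppose the underlying undirected graph of the network is connected, and suppose every nonzero vector n : Fin P → ℝ with Aᵀ.mulVec n = 0 has n ℓ ≠ 0 for some lossy pipe ℓ ∈ L (this encodes the modeling convention that every cycle of the network contains at least one lossy pipe). Fix a reference node r : Fin N. If (φ, ψ) and (φ̃, ψ̃) are both GF solutions for the same injections q and satisfy ψ r = ψ̃ r, then φ = φ̃ and ψ = ψ̃. -/
/-- A pair `(φ, ψ)` of flows and squared pressures is a gas-flow (GF) solution for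
injections `q`: pressures are nonnegative, mass is conserved, every lossy pipe
`ℓ ∈ L` satisfies the Weymouth equation, and every compressor `ℓ ∉ L` satisfies
the compressor equations. -/
def IsGFSolution {N P : ℕ} (t h : Fin P → Fin N) (L : Set (Fin P))
    (a α : Fin P → ℝ) (A : Matrix (Fin P) (Fin N) ℝ) (q : Fin N → ℝ)
    (φ : Fin P → ℝ) (ψ : Fin N → ℝ) : Prop :=
  (∀ n, 0 ≤ ψ n) ∧
  A.transpose.mulVec φ = q ∧
  (∀ ℓ ∈ L, ψ (t ℓ) - ψ (h ℓ) = a ℓ * Real.sign (φ ℓ) * (φ ℓ) ^ 2) ∧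
  (∀ ℓ ∉ L, ψ (h ℓ) = α ℓ * ψ (t ℓ) ∧ 0 ≤ φ ℓ)

lemma signsq_strictMono : StrictMono (fun x : ℝ => Real.sign x * x ^ 2) := by
  have h : (fun x : ℝ => Real.sign x * x ^ 2) = fun x => x * |x| := by
    funext x
    rcases lt_trichotomy x 0 with hx | hx | hx
    · rw [Real.sign_of_neg hx, abs_of_neg hx]; ring
    · simp [hx]
    · rw [Real.sign_of_pos hx, abs_of_pos hx]; ring
  rw [h]
  intro x y hxy
  show x * |x| < y * |y|
  rcases le_or_gt 0 x with hx | hx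
  · rw [abs_of_nonneg hx, abs_of_nonneg (le_trans hx hxy.le)]
    nlinarith
  · rcases le_or_gt 0 y with hy | hy
    · rw [abs_of_neg hx, abs_of_nonneg hy]
      nlinarith
    · rw [abs_of_neg hx, abs_of_neg hy]
      nlinarith

lemma walk_cross {V : Type*} {G : SimpleGraph V} {S : Set V} {u v : V} (w : G.Walk u v) :
    u ∈ S → v ∉ S → ∃ x y, G.Adj x y ∧ x ∈ S ∧ y ∉ S := by
  induction w with
  | nil => exact fun hu hv => absurd hu hv
  | @cons a b c adj p ih =>
    intro hu hv
    by_cases hb : b ∈ S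
    · exact ih hb hv
    · exact ⟨a, b, adj, hu, hb⟩

lemma gf_psi_le {N P : ℕ}
    (t h : Fin P → Fin N) (hth : ∀ ℓ, t ℓ ≠ h ℓ)
    (L : Set (Fin P)) (a α : Fin P → ℝ)
    (ha : ∀ ℓ ∈ L, 0 < a ℓ) (hα : ∀ ℓ ∉ L, 0 < α ℓ)
    (A : Matrix (Fin P) (Fin N) ℝ)
    (hA : ∀ ℓ k, A ℓ k = if k = t ℓ then 1 else if k = h ℓ then -1 else 0)
    (hconn : (SimpleGraph.fromRel fun m n => ∃ ℓ, t ℓ = m ∧ h ℓ = n).Connected)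
    (r : Fin N) (q : Fin N → ℝ)
    (φ φ' : Fin P → ℝ) (ψ ψ' : Fin N → ℝ)
    (hsol : IsGFSolution t h L a α A q φ ψ)
    (hsol' : IsGFSolution t h L a α A q φ' ψ')
    (href : ψ r = ψ' r) : ∀ n, ψ n ≤ ψ' n := by
  classical
  by_contra hcon
  push_neg at hcon
  obtain ⟨m, hm⟩ := hcon
  set S : Set (Fin N) := {n | ψ' n < ψ n} with hSdef
  have hmS : m ∈ S := hm
  have hr : r ∉ S := by simp [hSdef, href]
  -- kernel vector
  have hker : A.transpose.mulVec (φ - φ') = 0 := by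
    rw [Matrix.mulVec_sub, hsol.2.1, hsol'.2.1, sub_self]
  -- the four edge case facts
  have fact1 : ∀ ℓ ∈ L, t ℓ ∈ S → h ℓ ∉ S → φ' ℓ < φ ℓ := by
    intro ℓ hℓ ht hh
    have hw := hsol.2.2.1 ℓ hℓ
    have hw' := hsol'.2.2.1 ℓ hℓ
    have hts : ψ' (t ℓ) < ψ (t ℓ) := ht
    have hhs : ψ (h ℓ) ≤ ψ' (h ℓ) := not_lt.mp hh
    have hdiff : 0 < a ℓ * (Real.sign (φ ℓ) * φ ℓ ^ 2 - Real.sign (φ' ℓ) * φ' ℓ ^ 2) := by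
      nlinarith [hw, hw']
    have : Real.sign (φ' ℓ) * φ' ℓ ^ 2 < Real.sign (φ ℓ) * φ ℓ ^ 2 := by
      nlinarith [ha ℓ hℓ, hdiff]
    exact signsq_strictMono.lt_iff_lt.mp this
  have fact2 : ∀ ℓ, ℓ ∉ L → t ℓ ∈ S → h ℓ ∈ S ∨ t ℓ ∉ S := by
    intro ℓ hℓ ht
    left
    have hc := (hsol.2.2.2 ℓ hℓ).1
    have hc' := (hsol'.2.2.2 ℓ hℓ).1
    have hts : ψ' (t ℓ) < ψ (t ℓ) := ht
    show ψ' (h ℓ) < ψ (h ℓ)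
    rw [hc, hc']
    exact (mul_lt_mul_iff_right₀ (hα ℓ hℓ)).mpr hts
  have fact3 : ∀ ℓ ∈ L, t ℓ ∉ S → h ℓ ∈ S → φ ℓ < φ' ℓ := by
    intro ℓ hℓ ht hh
    have hw := hsol.2.2.1 ℓ hℓ
    have hw' := hsol'.2.2.1 ℓ hℓ
    have hts : ψ (t ℓ) ≤ ψ' (t ℓ) := not_lt.mp ht
    have hhs : ψ' (h ℓ) < ψ (h ℓ) := hh
    have : Real.sign (φ ℓ) * φ ℓ ^ 2 < Real.sign (φ' ℓ) * φ' ℓ ^ 2 := by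
      nlinarith [ha ℓ hℓ]
    exact signsq_strictMono.lt_iff_lt.mp this
  have fact4 : ∀ ℓ, ℓ ∉ L → h ℓ ∈ S → t ℓ ∈ S := by
    intro ℓ hℓ hh
    by_contra ht
    have hc := (hsol.2.2.2 ℓ hℓ).1
    have hc' := (hsol'.2.2.2 ℓ hℓ).1
    have hts : ψ (t ℓ) ≤ ψ' (t ℓ) := not_lt.mp ht
    have hhs : ψ' (h ℓ) < ψ (h ℓ) := hh
    rw [hc, hc'] at hhs
    have := (mul_le_mul_iff_right₀ (hα ℓ hℓ)).mpr hts
    linarith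
  -- term of the sum
  set c : Fin P → ℝ :=
    fun ℓ => ((if t ℓ ∈ S then (1:ℝ) else 0) - (if h ℓ ∈ S then 1 else 0)) * (φ ℓ - φ' ℓ)
    with hcdef
  have hcnonneg : ∀ ℓ, 0 ≤ c ℓ := by
    intro ℓ
    show 0 ≤ ((if t ℓ ∈ S then (1:ℝ) else 0) - (if h ℓ ∈ S then 1 else 0)) * (φ ℓ - φ' ℓ)
    by_cases ht : t ℓ ∈ S <;> by_cases hh : h ℓ ∈ S
    · simp [ht, hh]
    · rw [if_pos ht, if_neg hh]
      by_cases hℓ : ℓ ∈ L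
      · have := fact1 ℓ hℓ ht hh
        nlinarith
      · rcases fact2 ℓ hℓ ht with h1 | h1
        · exact absurd h1 hh
        · exact absurd ht h1
    · rw [if_neg ht, if_pos hh]
      by_cases hℓ : ℓ ∈ L
      · have := fact3 ℓ hℓ ht hh
        nlinarith
      · exact absurd (fact4 ℓ hℓ hh) ht
    · simp [ht, hh]
  have hcpos : ∀ ℓ, (t ℓ ∈ S ∧ h ℓ ∉ S) ∨ (t ℓ ∉ S ∧ h ℓ ∈ S) → 0 < c ℓ := by
    intro ℓ hcross
    show 0 < ((if t ℓ ∈ S then (1:ℝ) else 0) - (if h ℓ ∈ S then 1 else 0)) * (φ ℓ - φ' ℓ)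
    rcases hcross with ⟨ht, hh⟩ | ⟨ht, hh⟩
    · rw [if_pos ht, if_neg hh]
      by_cases hℓ : ℓ ∈ L
      · have := fact1 ℓ hℓ ht hh
        nlinarith
      · rcases fact2 ℓ hℓ ht with h1 | h1
        · exact absurd h1 hh
        · exact absurd ht h1
    · rw [if_neg ht, if_pos hh]
      by_cases hℓ : ℓ ∈ L
      · have := fact3 ℓ hℓ ht hh
        nlinarith
      · exact absurd (fact4 ℓ hℓ hh) ht
  -- sum over S is zero
  have hcolsum : ∀ ℓ, (∑ n ∈ Finset.univ.filter (· ∈ S), A ℓ n) =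
      ((if t ℓ ∈ S then (1:ℝ) else 0) - (if h ℓ ∈ S then 1 else 0)) := by
    intro ℓ
    have hsplit : ∀ n, A ℓ n =
        (if n = t ℓ then (1:ℝ) else 0) + (if n = h ℓ then (-1:ℝ) else 0) := by
      intro n
      rw [hA]
      by_cases h1 : n = t ℓ <;> by_cases h2 : n = h ℓ
      · exact absurd (h1.symm.trans h2) (hth ℓ)
      · simp [h1, h2, hth ℓ]
      · simp [h1, h2, (hth ℓ).symm]
      · simp [h1, h2]
    rw [Finset.sum_congr rfl fun n _ => hsplit n, Finset.sum_add_distrib,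
      Finset.sum_ite_eq', Finset.sum_ite_eq']
    simp only [Finset.mem_filter, Finset.mem_univ, true_and]
    by_cases ht : t ℓ ∈ S <;> by_cases hh : h ℓ ∈ S <;> simp [ht, hh]
  have hsum0 : ∑ ℓ, c ℓ = 0 := by
    have h0 : ∑ n ∈ Finset.univ.filter (· ∈ S), (A.transpose.mulVec (φ - φ')) n = 0 := by
      rw [hker]; simp
    rw [← h0]
    simp only [Matrix.mulVec, dotProduct, Matrix.transpose_apply]
    rw [Finset.sum_comm]
    refine Finset.sum_congr rfl fun ℓ _ => ?_
    show ((if t ℓ ∈ S then (1:ℝ) else 0) - (if h ℓ ∈ S then 1 else 0)) * (φ ℓ - φ' ℓ) = _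
    rw [← hcolsum ℓ, Finset.sum_mul]
    refine Finset.sum_congr rfl fun n _ => ?_
    simp [Pi.sub_apply]
  have hallzero : ∀ ℓ ∈ Finset.univ, c ℓ = 0 :=
    (Finset.sum_eq_zero_iff_of_nonneg fun ℓ _ => hcnonneg ℓ).mp hsum0
  -- connectivity gives a crossing edge
  obtain ⟨x, y, hxy, hxS, hyS⟩ := walk_cross ((hconn.preconnected m r).some) hmS hr
  rw [SimpleGraph.fromRel_adj] at hxy
  obtain ⟨-, ⟨ℓ, hℓt, hℓh⟩ | ⟨ℓ, hℓt, hℓh⟩⟩ := hxy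
  · have := hcpos ℓ (Or.inl ⟨hℓt ▸ hxS, hℓh ▸ hyS⟩)
    rw [hallzero ℓ (Finset.mem_univ ℓ)] at this
    exact lt_irrefl 0 this
  · have := hcpos ℓ (Or.inr ⟨hℓt ▸ hyS, hℓh ▸ hxS⟩)
    rw [hallzero ℓ (Finset.mem_univ ℓ)] at this
    exact lt_irrefl 0 this

/-- Theorem 1: uniqueness of the gas-flow solution. -/
theorem gas_flow_solution_unique {N P : ℕ} (hN : 1 ≤ N)
    (t h : Fin P → Fin N) (hth : ∀ ℓ, t ℓ ≠ h ℓ)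
    (L : Set (Fin P)) (a α : Fin P → ℝ)
    (ha : ∀ ℓ ∈ L, 0 < a ℓ) (hα : ∀ ℓ ∉ L, 0 < α ℓ)
    (A : Matrix (Fin P) (Fin N) ℝ)
    (hA : ∀ ℓ k, A ℓ k = if k = t ℓ then 1 else if k = h ℓ then -1 else 0)
    (hconn : (SimpleGraph.fromRel fun m n => ∃ ℓ, t ℓ = m ∧ h ℓ = n).Connected)
    (hcyc : ∀ n : Fin P → ℝ, n ≠ 0 → A.transpose.mulVec n = 0 → ∃ ℓ ∈ L, n ℓ ≠ 0)
    (r : Fin N) (q : Fin N → ℝ)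
    (φ φ' : Fin P → ℝ) (ψ ψ' : Fin N → ℝ)
    (hsol : IsGFSolution t h L a α A q φ ψ)
    (hsol' : IsGFSolution t h L a α A q φ' ψ')
    (href : ψ r = ψ' r) :
    φ = φ' ∧ ψ = ψ' := by
  have hψ : ψ = ψ' := by
    funext n
    exact le_antisymm
      (gf_psi_le t h hth L a α ha hα A hA hconn r q φ φ' ψ ψ' hsol hsol' href n)
      (gf_psi_le t h hth L a α ha hα A hA hconn r q φ' φ ψ' ψ hsol' hsol href.symm n)
  have hker : A.transpose.mulVec (φ - φ') = 0 := by
    rw [Matrix.mulVec_sub, hsol.2.1, hsol'.2.1, sub_self]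
  have hφL : ∀ ℓ ∈ L, φ ℓ = φ' ℓ := by
    intro ℓ hℓ
    have hw := hsol.2.2.1 ℓ hℓ
    have hw' := hsol'.2.2.1 ℓ hℓ
    rw [hψ] at hw
    have heq : a ℓ * (Real.sign (φ ℓ) * φ ℓ ^ 2) = a ℓ * (Real.sign (φ' ℓ) * φ' ℓ ^ 2) := by
      nlinarith [hw, hw']
    exact signsq_strictMono.injective (mul_left_cancel₀ (ne_of_gt (ha ℓ hℓ)) heq)
  have hφ : φ - φ' = 0 := by
    by_contra hne
    obtain ⟨ℓ, hℓ, h0⟩ := hcyc (φ - φ') hne hker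
    exact h0 (by simp [Pi.sub_apply, hφL ℓ hℓ])
  exact ⟨sub_eq_zero.mp hφ, hψ⟩
end

section
/- (Lemma 2: no monotone flow deviation around a single cycle) Assume at least one edge of the cycle is a lossy pipe. Let (φ, ψ) and (φ̃, ψ̃) both satisfy the cycle equations with ψ 0 = ψ̃ 0. Then it is NOT the case that σ i * (φ̃ i − φ i) < 0 for every i : ZMod m, and it is NOT the case that σ i * (φ̃ i − φ i) > 0 for every i : ZMod m. -/
/-- Cycle equations for a single-cycle gas network on nodes `ZMod m`: pressures are
nonnegative; each lossy edge `i ∈ L` (joining nodes `i` and `i+1`, with orientation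
sign `σ i`) satisfies the Weymouth equation; each compressor edge `i ∉ L` carries a
nonnegative flow and satisfies the compressor pressure relation in the direction
indicated by `σ i`. -/
def CycleEqs {m : ℕ} (σ : ZMod m → ℝ) (L : Set (ZMod m)) (a α : ZMod m → ℝ)
    (φ ψ : ZMod m → ℝ) : Prop :=
  (∀ i, 0 ≤ ψ i) ∧
  (∀ i ∈ L, σ i * (ψ i - ψ (i + 1)) = a i * Real.sign (φ i) * (φ i) ^ 2) ∧
  (∀ i ∉ L, 0 ≤ φ i ∧ (σ i = 1 → ψ (i + 1) = α i * ψ i) ∧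
    (σ i = -1 → ψ i = α i * ψ (i + 1)))

lemma sign_sq_eq (x : ℝ) : Real.sign x * x ^ 2 = x * |x| := by
  rcases lt_trichotomy x 0 with h | h | h
  · rw [Real.sign_of_neg h, abs_of_neg h]; ring
  · simp [h]
  · rw [Real.sign_of_pos h, abs_of_pos h]; ring

lemma mulabs_lt {x y : ℝ} (h : x < y) : x * |x| < y * |y| := by
  rcases le_or_gt 0 x with hx | hx
  · rw [abs_of_nonneg hx, abs_of_nonneg (hx.trans h.le)]; nlinarith
  · rcases le_or_gt 0 y with hy | hy
    · rw [abs_of_neg hx, abs_of_nonneg hy]; nlinarith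
    · rw [abs_of_neg hx, abs_of_neg hy]; nlinarith

lemma no_increase_aux {m : ℕ} (hm : 2 ≤ m)
    (σ : ZMod m → ℝ) (hσ : ∀ i, σ i = 1 ∨ σ i = -1)
    (L : Set (ZMod m)) (hL : L.Nonempty)
    (a α : ZMod m → ℝ) (ha : ∀ i ∈ L, 0 < a i) (hα : ∀ i ∉ L, 0 < α i)
    (φ ψ φ' ψ' : ZMod m → ℝ)
    (hsol : CycleEqs σ L a α φ ψ) (hsol' : CycleEqs σ L a α φ' ψ')
    (href : ψ 0 = ψ' 0) (h : ∀ i, 0 < σ i * (φ' i - φ i)) : False := by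
  haveI : NeZero m := ⟨by omega⟩
  have key : ∀ i : ZMod m,
      (i ∈ L → ψ' (i + 1) - ψ (i + 1) < ψ' i - ψ i) ∧
      (i ∉ L → ∃ c : ℝ, 0 < c ∧ ψ' (i + 1) - ψ (i + 1) = c * (ψ' i - ψ i)) := by
    intro i
    constructor
    · intro hi
      have e := hsol.2.1 i hi
      have e' := hsol'.2.1 i hi
      rw [mul_assoc, sign_sq_eq] at e e'
      have hai := ha i hi
      rcases hσ i with hs | hs
      · rw [hs, one_mul] at e e'
        have hφ : φ i < φ' i := by have := h i; rw [hs, one_mul] at this; linarith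
        have := mul_lt_mul_of_pos_left (mulabs_lt hφ) hai
        linarith
      · rw [hs] at e e'
        have hφ : φ' i < φ i := by have := h i; rw [hs] at this; nlinarith
        have := mul_lt_mul_of_pos_left (mulabs_lt hφ) hai
        linarith
    · intro hi
      obtain ⟨-, hc1, hc2⟩ := hsol.2.2 i hi
      obtain ⟨-, hc1', hc2'⟩ := hsol'.2.2 i hi
      have hαi := hα i hi
      rcases hσ i with hs | hs
      · exact ⟨α i, hαi, by rw [hc1 hs, hc1' hs]; ring⟩
      · refine ⟨(α i)⁻¹, inv_pos.2 hαi, ?_⟩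
        rw [hc2 hs, hc2' hs]
        field_simp
  set d : ℕ → ℝ := fun k => ψ' (k : ZMod m) - ψ (k : ZMod m) with hd
  have d0 : d 0 = 0 := by simp [hd, href]
  have dstep : ∀ n : ℕ, d (n + 1) = ψ' ((n : ZMod m) + 1) - ψ ((n : ZMod m) + 1) := by
    intro n; simp [hd]
  have hle : ∀ k, d k ≤ 0 := by
    intro k
    induction k with
    | zero => exact d0.le
    | succ n ih =>
      rw [dstep]
      by_cases hin : (n : ZMod m) ∈ L
      · have := (key _).1 hin
        simp only [hd] at ih
        linarith
      · obtain ⟨c, hc0, he⟩ := (key _).2 hin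
        rw [he]
        simp only [hd] at ih
        exact mul_nonpos_of_nonneg_of_nonpos hc0.le ih
  have hlt : ∀ k, d k < 0 → d (k + 1) < 0 := by
    intro k hk
    rw [dstep]
    simp only [hd] at hk
    by_cases hin : (k : ZMod m) ∈ L
    · have := (key _).1 hin; linarith
    · obtain ⟨c, hc0, he⟩ := (key _).2 hin
      rw [he]
      exact mul_neg_of_pos_of_neg hc0 hk
  obtain ⟨j, hj⟩ := hL
  have hjcast : ((j.val : ℕ) : ZMod m) = j := by rw [ZMod.natCast_val, ZMod.cast_id]
  have h1 : d (j.val + 1) < 0 := by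
    rw [dstep, hjcast]
    have h2 := (key j).1 hj
    have h3 := hle j.val
    simp only [hd, hjcast] at h3
    linarith
  have h2 : ∀ t, d (j.val + 1 + t) < 0 := by
    intro t
    induction t with
    | zero => exact h1
    | succ n ih => exact hlt _ ih
  have hjv : j.val < m := ZMod.val_lt j
  have h3 := h2 (m - (j.val + 1))
  have : j.val + 1 + (m - (j.val + 1)) = m := by omega
  rw [this] at h3
  have : d m = 0 := by simp [hd, ZMod.natCast_self, href]
  linarith

/-- Lemma 2: no monotone flow deviation around a single cycle. -/
theorem no_monotone_cycle_deviation {m : ℕ} (hm : 2 ≤ m)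
    (σ : ZMod m → ℝ) (hσ : ∀ i, σ i = 1 ∨ σ i = -1)
    (L : Set (ZMod m)) (hL : L.Nonempty)
    (a α : ZMod m → ℝ) (ha : ∀ i ∈ L, 0 < a i) (hα : ∀ i ∉ L, 0 < α i)
    (φ ψ φ' ψ' : ZMod m → ℝ)
    (hsol : CycleEqs σ L a α φ ψ) (hsol' : CycleEqs σ L a α φ' ψ')
    (href : ψ 0 = ψ' 0) :
    ¬ (∀ i, σ i * (φ' i - φ i) < 0) ∧ ¬ (∀ i, σ i * (φ' i - φ i) > 0) := by
  constructor
  · intro h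
    exact no_increase_aux hm σ hσ L hL a α ha hα φ' ψ' φ ψ hsol' hsol href.symm
      (fun i => by have := h i; nlinarith)
  · intro h
    exact no_increase_aux hm σ hσ L hL a α ha hα φ ψ φ' ψ' hsol hsol' href
      (fun i => h i)
end

section
/- (Lemma 3: conic cycle decomposition of circulations) For every n : Fin P → ℝ with Aᵀ.mulVec n = 0 there exist a finite family of cycles C₁, …, C_s of the multigraph and coefficients λ₁, …, λ_s ≥ 0 such that n = Σ_{j} λ_j • n_{C_j}, and the indicator vectors are pairwise sign-consistent: n_{C_j} ℓ * n_{C_{j'}} ℓ ≥ 0 for all j, j' and every edge ℓ : Fin P. -/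
/-- A cycle of length `m ≥ 2` in the directed multigraph with tail map `t` and head
map `h`: injective maps `v` (nodes) and `e` (edges) indexed by `ZMod m`, such that
edge `e j` joins `v j` and `v (j+1)` in one of the two directions. -/
structure GraphCycle {N P : ℕ} (t h : Fin P → Fin N) where
  m : ℕ
  hm : 2 ≤ m
  v : ZMod m → Fin N
  e : ZMod m → Fin P
  hv : Function.Injective v
  he : Function.Injective e
  hedge : ∀ j : ZMod m,
    (t (e j), h (e j)) = (v j, v (j + 1)) ∨ (t (e j), h (e j)) = (v (j + 1), v j)

/-- Indicator vector of a cycle: `+1` at edge `e j` when `t (e j) = v j` (the edge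
direction agrees with the cycle direction), `-1` when `t (e j) = v (j+1)`, and `0`
at edges not on the cycle. -/
noncomputable def GraphCycle.ind {N P : ℕ} {t h : Fin P → Fin N}
    (C : GraphCycle t h) : Fin P → ℝ := fun ℓ =>
  letI := Classical.propDecidable (∃ j, C.e j = ℓ)
  if hj : ∃ j, C.e j = ℓ then (if t ℓ = C.v hj.choose then 1 else -1) else 0

section
variable {N P : ℕ} {t h : Fin P → Fin N}

def IsCirc (t h : Fin P → Fin N) (n : Fin P → ℝ) : Prop :=
  ∀ k, ∑ ℓ, ((if k = t ℓ then n ℓ else 0) - (if k = h ℓ then n ℓ else 0)) = 0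

lemma GraphCycle.one_ne_zero' (C : GraphCycle t h) : (1 : ZMod C.m) ≠ 0 := by
  have hm := C.hm
  haveI : NeZero C.m := ⟨by omega⟩
  haveI : Fact (1 < C.m) := ⟨by omega⟩
  intro hcon
  have := congrArg ZMod.val hcon
  rw [ZMod.val_one, ZMod.val_zero] at this
  omega

lemma GraphCycle.succ_ne (C : GraphCycle t h) (j : ZMod C.m) : j + 1 ≠ j := by
  intro hcon
  exact C.one_ne_zero' (by
    have := congrArg (fun x => x - j) hcon
    simpa [add_comm] using this)

lemma GraphCycle.ind_of_notMem (C : GraphCycle t h) {ℓ : Fin P}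
    (hℓ : ¬∃ j, C.e j = ℓ) : C.ind ℓ = 0 := by
  unfold GraphCycle.ind
  rw [dif_neg hℓ]

lemma GraphCycle.ind_apply_e (C : GraphCycle t h) (j : ZMod C.m) :
    C.ind (C.e j) = if t (C.e j) = C.v j then 1 else -1 := by
  have hj : ∃ j', C.e j' = C.e j := ⟨j, rfl⟩
  unfold GraphCycle.ind
  rw [dif_pos hj]
  have : hj.choose = j := C.he hj.choose_spec
  rw [this]

/-- Cycle extraction: a nonzero circulation supports a cycle whose indicator is
sign-consistent with it. -/
lemma exists_cycle (hth : ∀ ℓ, t ℓ ≠ h ℓ) (n : Fin P → ℝ)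
    (hn : IsCirc t h n) (hne : n ≠ 0) :
    ∃ C : GraphCycle t h, ∀ ℓ, C.ind ℓ ≠ 0 → 0 < C.ind ℓ * n ℓ := by
  classical
  -- nodes with incoming (sign-oriented) flow
  set hasIn : Fin N → Prop :=
    fun a => ∃ ℓ, (h ℓ = a ∧ 0 < n ℓ) ∨ (t ℓ = a ∧ n ℓ < 0) with hhasIn
  -- every node with incoming flow has an outgoing flow edge
  have step : ∀ a, hasIn a → ∃ b, ∃ ℓ,
      ((t ℓ = a ∧ h ℓ = b ∧ 0 < n ℓ) ∨ (t ℓ = b ∧ h ℓ = a ∧ n ℓ < 0)) ∧ hasIn b := by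
    intro a ⟨ℓ₀, hℓ₀⟩
    by_contra hno
    push_neg at hno
    have hout : ∀ ℓ, ¬((t ℓ = a ∧ 0 < n ℓ) ∨ (h ℓ = a ∧ n ℓ < 0)) := by
      rintro ℓ (⟨h1, h2⟩ | ⟨h1, h2⟩)
      · exact hno (h ℓ) ℓ (Or.inl ⟨h1, rfl, h2⟩) ⟨ℓ, Or.inl ⟨rfl, h2⟩⟩
      · exact hno (t ℓ) ℓ (Or.inr ⟨rfl, h1, h2⟩) ⟨ℓ, Or.inr ⟨rfl, h2⟩⟩
    have hterm : ∀ ℓ : Fin P,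
        (if a = t ℓ then n ℓ else 0) - (if a = h ℓ then n ℓ else 0) ≤ 0 := by
      intro ℓ
      have h1 : t ℓ = a → n ℓ ≤ 0 := fun ht' => by
        by_contra hc; push_neg at hc; exact hout ℓ (Or.inl ⟨ht', hc⟩)
      have h2 : h ℓ = a → 0 ≤ n ℓ := fun hh' => by
        by_contra hc; push_neg at hc; exact hout ℓ (Or.inr ⟨hh', hc⟩)
      have h3 := hth ℓ
      split_ifs with hA hB hB
      · exact absurd (hA ▸ hB) h3
      · have := h1 hA.symm; linarith
      · have := h2 hB.symm; linarith
      · linarith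
    have hstrict : ∃ ℓ ∈ Finset.univ,
        (if a = t ℓ then n ℓ else 0) - (if a = h ℓ then n ℓ else 0) < 0 := by
      refine ⟨ℓ₀, Finset.mem_univ _, ?_⟩
      rcases hℓ₀ with ⟨h1, h2⟩ | ⟨h1, h2⟩
      · have hta : a ≠ t ℓ₀ := fun hc => hth ℓ₀ (by rw [← hc, h1])
        rw [if_neg hta, if_pos h1.symm]; linarith
      · have hha : a ≠ h ℓ₀ := fun hc => hth ℓ₀ (by rw [h1, hc])
        rw [if_pos h1.symm, if_neg hha]; linarith
    have hlt : ∑ ℓ, ((if a = t ℓ then n ℓ else 0) - (if a = h ℓ then n ℓ else 0)) < 0 := by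
      obtain ⟨ℓ₁, _, hℓ₁⟩ := hstrict
      calc ∑ ℓ, ((if a = t ℓ then n ℓ else 0) - (if a = h ℓ then n ℓ else 0))
          < ∑ _ℓ : Fin P, (0:ℝ) :=
            Finset.sum_lt_sum (fun i _ => hterm i) ⟨ℓ₁, Finset.mem_univ _, hℓ₁⟩
        _ = 0 := by simp
    exact absurd (hn a) (ne_of_lt hlt)
  -- choose next node and witnessing edge
  choose nxt edg hprop hin using step
  have hstart : ∃ a, hasIn a := by
    have hex0 : ∃ ℓ, n ℓ ≠ 0 := by
      by_contra hc; push_neg at hc; exact hne (funext fun ℓ => hc ℓ)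
    obtain ⟨ℓ, hℓ⟩ := hex0
    rcases lt_or_gt_of_ne hℓ with hneg | hpos
    · exact ⟨t ℓ, ℓ, Or.inr ⟨rfl, hneg⟩⟩
    · exact ⟨h ℓ, ℓ, Or.inl ⟨rfl, hpos⟩⟩
  obtain ⟨a₀, ha₀⟩ := hstart
  set g : {a // hasIn a} → {a // hasIn a} :=
    fun p => ⟨nxt p.1 p.2, hin p.1 p.2⟩ with hgdef
  set w : ℕ → {a // hasIn a} := fun k => g^[k] ⟨a₀, ha₀⟩ with hwdef
  have hwsucc : ∀ k, w (k + 1) = g (w k) := fun k => Function.iterate_succ_apply' g k _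
  set E : ℕ → Fin P := fun k => edg (w k).1 (w k).2 with hEdef
  have hEprop : ∀ k, (t (E k) = (w k).1 ∧ h (E k) = (w (k+1)).1 ∧ 0 < n (E k)) ∨
      (t (E k) = (w (k+1)).1 ∧ h (E k) = (w k).1 ∧ n (E k) < 0) := by
    intro k
    have hp := hprop (w k).1 (w k).2
    rw [hwsucc k]
    exact hp
  have wall : ∀ k, (w k).1 ≠ (w (k+1)).1 := by
    intro k hcon
    rcases hEprop k with ⟨h1, h2, _⟩ | ⟨h1, h2, _⟩
    · exact hth (E k) (by rw [h1, h2, hcon])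
    · exact hth (E k) (by rw [h1, h2, hcon])
  -- pigeonhole: a repeated node along the walk
  have hex : ∃ d, 0 < d ∧ ∃ i, (w i).1 = (w (i + d)).1 := by
    have hcard : Fintype.card (Fin N) < Fintype.card (Fin (N+1)) := by simp
    obtain ⟨i, j, hij, hw⟩ := Fintype.exists_ne_map_eq_of_card_lt
      (fun i : Fin (N+1) => (w i.val).1) hcard
    rcases lt_or_gt_of_ne hij with hlt | hlt
    · have hvlt : i.val < j.val := hlt
      have heq : i.val + (j.val - i.val) = j.val := by omega
      exact ⟨j.val - i.val, by omega, i.val, by rw [heq]; exact hw⟩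
    · have hvlt : j.val < i.val := hlt
      have heq : j.val + (i.val - j.val) = i.val := by omega
      exact ⟨i.val - j.val, by omega, j.val, by rw [heq]; exact hw.symm⟩
  set m := Nat.find hex with hmdef
  obtain ⟨hmpos, i₀, hrep⟩ := Nat.find_spec hex
  rw [← hmdef] at hmpos hrep
  have hmin : ∀ d, 0 < d → d < m → ∀ i, (w i).1 ≠ (w (i + d)).1 := by
    intro d hd hdm i hcon
    exact (Nat.find_min hex hdm) ⟨hd, i, hcon⟩
  have hm2 : 2 ≤ m := by
    by_contra hc
    have hm1 : m = 1 := by omega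
    rw [hm1] at hrep
    exact wall i₀ hrep
  haveI : NeZero m := ⟨by omega⟩
  set v : ZMod m → Fin N := fun k => (w (i₀ + k.val)).1 with hvdef
  set e : ZMod m → Fin P := fun k => E (i₀ + k.val) with hedef
  have hvinj : Function.Injective v := by
    intro k k' hkk
    have hk := ZMod.val_lt k
    have hk' := ZMod.val_lt k'
    rcases lt_trichotomy k.val k'.val with hlt | heq | hlt
    · exfalso
      refine hmin (k'.val - k.val) (by omega) (by omega) (i₀ + k.val) ?_
      have harith : i₀ + k.val + (k'.val - k.val) = i₀ + k'.val := by omega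
      rw [harith]; exact hkk
    · exact ZMod.val_injective m heq
    · exfalso
      refine hmin (k.val - k'.val) (by omega) (by omega) (i₀ + k'.val) ?_
      have harith : i₀ + k'.val + (k.val - k'.val) = i₀ + k.val := by omega
      rw [harith]; exact hkk.symm
  have hnext : ∀ k : ZMod m, (w (i₀ + k.val + 1)).1 = v (k + 1) := by
    intro k
    have hk := ZMod.val_lt k
    have hval : (k + 1).val = (k.val + 1) % m := by
      haveI : Fact (1 < m) := ⟨by omega⟩
      rw [ZMod.val_add, ZMod.val_one]
    rcases Nat.lt_or_ge (k.val + 1) m with hc | hc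
    · simp only [hvdef, hval, Nat.mod_eq_of_lt hc]
      rw [← Nat.add_assoc]
    · have hkm : k.val + 1 = m := by omega
      simp only [hvdef, hval, hkm, Nat.mod_self]
      have harith : i₀ + k.val + 1 = i₀ + m := by omega
      rw [harith, Nat.add_zero]
      exact hrep.symm
  have hEk : ∀ k : ZMod m, (t (e k) = v k ∧ h (e k) = v (k+1) ∧ 0 < n (e k)) ∨
      (t (e k) = v (k+1) ∧ h (e k) = v k ∧ n (e k) < 0) := by
    intro k
    have hp := hEprop (i₀ + k.val)
    rw [hnext k] at hp
    exact hp
  have heinj : Function.Injective e := by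
    intro k k' hkk
    rcases hEk k with ⟨h1, h2, h3⟩ | ⟨h1, h2, h3⟩ <;>
      rcases hEk k' with ⟨h1', h2', h3'⟩ | ⟨h1', h2', h3'⟩ <;>
      rw [hkk] at h1 h2 h3
    · exact hvinj (h1.symm.trans h1')
    · linarith
    · linarith
    · exact hvinj (h2.symm.trans h2')
  have hedgeC : ∀ j : ZMod m,
      (t (e j), h (e j)) = (v j, v (j + 1)) ∨ (t (e j), h (e j)) = (v (j + 1), v j) := by
    intro j
    rcases hEk j with ⟨h1, h2, _⟩ | ⟨h1, h2, _⟩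
    · exact Or.inl (by rw [h1, h2])
    · exact Or.inr (by rw [h1, h2])
  refine ⟨⟨m, hm2, v, e, hvinj, heinj, hedgeC⟩, ?_⟩
  intro ℓ hℓ
  have hjex : ∃ j, e j = ℓ := by
    by_contra hc
    exact hℓ (GraphCycle.ind_of_notMem _ hc)
  obtain ⟨j, hj⟩ := hjex
  have hind := GraphCycle.ind_apply_e ⟨m, hm2, v, e, hvinj, heinj, hedgeC⟩ j
  rw [← hj]
  rcases hEk j with ⟨h1, h2, h3⟩ | ⟨h1, h2, h3⟩
  · rw [hind, if_pos h1]; linarith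
  · have hne : t (e j) ≠ v j := by
      rw [h1]
      intro hcon
      exact GraphCycle.succ_ne ⟨m, hm2, v, e, hvinj, heinj, hedgeC⟩ j (hvinj hcon)
    rw [hind, if_neg hne]; linarith

lemma GraphCycle.ind_cases (C : GraphCycle t h) (ℓ : Fin P) :
    C.ind ℓ = 0 ∨ C.ind ℓ = 1 ∨ C.ind ℓ = -1 := by
  unfold GraphCycle.ind
  split_ifs <;> simp

lemma GraphCycle.ind_circ (hth : ∀ ℓ, t ℓ ≠ h ℓ) (C : GraphCycle t h) :
    IsCirc t h C.ind := by
  intro k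
  haveI : NeZero C.m := ⟨by have := C.hm; omega⟩
  classical
  set g : Fin P → ℝ :=
    fun ℓ => (if k = t ℓ then C.ind ℓ else 0) - (if k = h ℓ then C.ind ℓ else 0) with hg
  have h0 : ∀ ℓ ∈ Finset.univ, ℓ ∉ Finset.univ.image C.e → g ℓ = 0 := by
    intro ℓ _ hℓ
    have : ¬∃ j, C.e j = ℓ := by
      intro ⟨j, hj⟩
      exact hℓ (Finset.mem_image.mpr ⟨j, Finset.mem_univ _, hj⟩)
    simp [hg, C.ind_of_notMem this]
  have h1 : ∑ ℓ, g ℓ = ∑ ℓ ∈ Finset.univ.image C.e, g ℓ :=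
    (Finset.sum_subset (Finset.subset_univ _) h0).symm
  have h2 : ∑ ℓ ∈ Finset.univ.image C.e, g ℓ = ∑ j, g (C.e j) :=
    Finset.sum_image (fun a _ b _ hab => C.he hab)
  have h3 : ∀ j, g (C.e j) =
      (if k = C.v j then 1 else 0) - (if k = C.v (j + 1) then (1:ℝ) else 0) := by
    intro j
    have hind := C.ind_apply_e j
    rcases C.hedge j with hcase | hcase
    · have ht : t (C.e j) = C.v j := (Prod.mk.injEq _ _ _ _ ▸ hcase).1
      have hh : h (C.e j) = C.v (j + 1) := (Prod.mk.injEq _ _ _ _ ▸ hcase).2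
      rw [if_pos ht] at hind
      simp only [hg, ht, hh, hind]
    · have ht : t (C.e j) = C.v (j + 1) := (Prod.mk.injEq _ _ _ _ ▸ hcase).1
      have hh : h (C.e j) = C.v j := (Prod.mk.injEq _ _ _ _ ▸ hcase).2
      have hne : t (C.e j) ≠ C.v j := by
        rw [ht]
        exact fun hcon => C.succ_ne j (C.hv hcon)
      rw [if_neg hne] at hind
      simp only [hg, ht, hh, hind]
      split_ifs <;> ring
  have h4 : ∑ j : ZMod C.m, (if k = C.v (j + 1) then (1:ℝ) else 0)
      = ∑ j : ZMod C.m, (if k = C.v j then (1:ℝ) else 0) :=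
    Fintype.sum_equiv (Equiv.addRight (1 : ZMod C.m)) _ _ (fun j => rfl)
  calc ∑ ℓ, g ℓ = ∑ j, g (C.e j) := by rw [h1, h2]
    _ = ∑ j : ZMod C.m, ((if k = C.v j then 1 else 0) - (if k = C.v (j + 1) then (1:ℝ) else 0)) :=
        Finset.sum_congr rfl (fun j _ => h3 j)
    _ = 0 := by rw [Finset.sum_sub_distrib, h4, sub_self]

lemma IsCirc.sub_smul {n u : Fin P → ℝ} (hn : IsCirc t h n) (hu : IsCirc t h u) (a : ℝ) :
    IsCirc t h (n - a • u) := by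
  intro k
  calc ∑ ℓ, ((if k = t ℓ then (n - a • u) ℓ else 0) - (if k = h ℓ then (n - a • u) ℓ else 0))
      = ∑ ℓ, (((if k = t ℓ then n ℓ else 0) - (if k = h ℓ then n ℓ else 0))
          - a * ((if k = t ℓ then u ℓ else 0) - (if k = h ℓ then u ℓ else 0))) := by
        refine Finset.sum_congr rfl fun ℓ _ => ?_
        simp only [Pi.sub_apply, Pi.smul_apply, smul_eq_mul]
        split_ifs <;> ring
    _ = 0 := by rw [Finset.sum_sub_distrib, ← Finset.mul_sum, hn k, hu k]; ring

lemma decomp (hth : ∀ ℓ, t ℓ ≠ h ℓ) :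
    ∀ (c : ℕ) (n : Fin P → ℝ),
      (Finset.univ.filter fun ℓ => n ℓ ≠ 0).card ≤ c → IsCirc t h n →
      ∃ (s : ℕ) (C : Fin s → GraphCycle t h) (lam : Fin s → ℝ),
        (∀ j, 0 ≤ lam j) ∧ n = ∑ j, lam j • (C j).ind ∧
        ∀ j ℓ, (C j).ind ℓ ≠ 0 → 0 < (C j).ind ℓ * n ℓ := by
  intro c
  induction c with
  | zero =>
    intro n hcard hcirc
    classical
    have hz : n = 0 := by
      funext ℓ
      by_contra hc
      have hc' : n ℓ ≠ 0 := by simpa using hc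
      have hmem : ℓ ∈ Finset.univ.filter fun ℓ => n ℓ ≠ 0 := by simp [hc']
      have := Finset.card_pos.mpr ⟨ℓ, hmem⟩
      omega
    exact ⟨0, Fin.elim0, Fin.elim0, fun j => j.elim0, by simp [hz], fun j => j.elim0⟩
  | succ c ih =>
    intro n hcard hcirc
    classical
    by_cases hzero : n = 0
    · exact ⟨0, Fin.elim0, Fin.elim0, fun j => j.elim0, by simp [hzero], fun j => j.elim0⟩
    obtain ⟨C₀, hs⟩ := exists_cycle hth n hcirc hzero
    set T := Finset.univ.filter fun ℓ => C₀.ind ℓ ≠ 0 with hT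
    have hTne : T.Nonempty := by
      haveI : NeZero C₀.m := ⟨by have := C₀.hm; omega⟩
      refine ⟨C₀.e 0, ?_⟩
      simp only [hT, Finset.mem_filter, Finset.mem_univ, true_and]
      rw [C₀.ind_apply_e 0]
      split_ifs <;> norm_num
    set lam₀ := (T.image fun ℓ => |n ℓ|).min' (hTne.image _) with hlam₀
    obtain ⟨ℓs, hℓsT, hℓs⟩ :=
      Finset.mem_image.mp ((T.image fun ℓ => |n ℓ|).min'_mem (hTne.image _))
    have hℓs : |n ℓs| = lam₀ := hℓs
    have hℓsind : C₀.ind ℓs ≠ 0 := (Finset.mem_filter.mp hℓsT).2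
    have hℓspos : 0 < C₀.ind ℓs * n ℓs := hs ℓs hℓsind
    have hnℓs : n ℓs ≠ 0 := fun hc => by
      rw [hc, mul_zero] at hℓspos; exact lt_irrefl _ hℓspos
    have hlampos : 0 < lam₀ := by rw [← hℓs]; exact abs_pos.mpr hnℓs
    have hlamle : ∀ ℓ ∈ T, lam₀ ≤ |n ℓ| := fun ℓ hℓ =>
      Finset.min'_le _ _ (Finset.mem_image_of_mem _ hℓ)
    set n' := n - lam₀ • C₀.ind with hn'
    have hcirc' : IsCirc t h n' := hcirc.sub_smul (C₀.ind_circ hth) lam₀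
    have hsub : ∀ ℓ, n' ℓ ≠ 0 → n ℓ ≠ 0 := by
      intro ℓ hℓ hc
      have hind0 : C₀.ind ℓ = 0 := by
        by_contra hcc
        have := hs ℓ hcc
        rw [hc, mul_zero] at this
        exact lt_irrefl _ this
      apply hℓ
      simp [hn', hc, hind0]
    have hzeroℓs : n' ℓs = 0 := by
      rcases C₀.ind_cases ℓs with h0 | h1 | h1
      · exact absurd h0 hℓsind
      · have hpos : 0 < n ℓs := by rw [h1, one_mul] at hℓspos; exact hℓspos
        simp only [hn', Pi.sub_apply, Pi.smul_apply, smul_eq_mul, h1, mul_one]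
        rw [← hℓs, abs_of_pos hpos]
        ring
      · have hneg : n ℓs < 0 := by
          rw [h1] at hℓspos; nlinarith
        simp only [hn', Pi.sub_apply, Pi.smul_apply, smul_eq_mul, h1]
        rw [← hℓs, abs_of_neg hneg]
        ring
    have hcard' : (Finset.univ.filter fun ℓ => n' ℓ ≠ 0).card ≤ c := by
      have hsubset : (Finset.univ.filter fun ℓ => n' ℓ ≠ 0) ⊆
          (Finset.univ.filter fun ℓ => n ℓ ≠ 0) := by
        intro ℓ hℓ
        simp only [Finset.mem_filter, Finset.mem_univ, true_and] at hℓ ⊢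
        exact hsub ℓ hℓ
      have hss : (Finset.univ.filter fun ℓ => n' ℓ ≠ 0) ⊂
          (Finset.univ.filter fun ℓ => n ℓ ≠ 0) := by
        refine (Finset.ssubset_iff_of_subset hsubset).mpr ⟨ℓs, ?_, ?_⟩
        · simp [hnℓs]
        · simp [hzeroℓs]
      have := Finset.card_lt_card hss
      omega
    obtain ⟨s', C', lam', hge', hsum', hsgn'⟩ := ih n' hcard' hcirc'
    have htrans : ∀ ℓ, n' ℓ ≠ 0 → 0 < n' ℓ * n ℓ := by
      intro ℓ hℓ
      rcases C₀.ind_cases ℓ with h0 | h1 | h1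
      · have hval : n' ℓ = n ℓ := by simp [hn', h0]
        rw [hval]
        exact mul_self_pos.mpr (hsub ℓ hℓ)
      · have hpos : 0 < n ℓ := by
          have := hs ℓ (by rw [h1]; norm_num)
          rw [h1, one_mul] at this; exact this
        have hle : lam₀ ≤ n ℓ := by
          have := hlamle ℓ (by simp [hT, h1])
          rwa [abs_of_pos hpos] at this
        have hval : n' ℓ = n ℓ - lam₀ := by
          simp [hn', h1]
        rw [hval] at hℓ ⊢
        have hlt : 0 < n ℓ - lam₀ := lt_of_le_of_ne (by linarith) (Ne.symm hℓ)
        exact mul_pos hlt hpos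
      · have hneg : n ℓ < 0 := by
          have := hs ℓ (by rw [h1]; norm_num)
          rw [h1] at this; nlinarith
        have hle : lam₀ ≤ -n ℓ := by
          have := hlamle ℓ (by simp [hT, h1])
          rwa [abs_of_neg hneg] at this
        have hval : n' ℓ = n ℓ + lam₀ := by
          simp only [hn', Pi.sub_apply, Pi.smul_apply, smul_eq_mul, h1]
          ring
        rw [hval] at hℓ ⊢
        have hlt : n ℓ + lam₀ < 0 := lt_of_le_of_ne (by linarith) hℓ
        exact mul_pos_of_neg_of_neg hlt hneg
    refine ⟨s' + 1, Fin.cons C₀ C', Fin.cons lam₀ lam', ?_, ?_, ?_⟩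
    · intro j
      refine Fin.cases ?_ ?_ j
      · exact le_of_lt hlampos
      · intro i; exact hge' i
    · rw [Fin.sum_univ_succ]
      simp only [Fin.cons_zero, Fin.cons_succ]
      rw [← hsum', hn']
      abel
    · intro j ℓ
      refine Fin.cases ?_ ?_ j
      · intro hind
        simp only [Fin.cons_zero] at hind ⊢
        exact hs ℓ hind
      · intro i hind
        simp only [Fin.cons_succ] at hind ⊢
        have h1 := hsgn' i ℓ hind
        have hn'ne : n' ℓ ≠ 0 := fun hc => by
          rw [hc, mul_zero] at h1; exact lt_irrefl _ h1
        have h2 := htrans ℓ hn'ne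
        nlinarith [mul_pos h1 h2, mul_self_pos.mpr hn'ne]

end


/-- Lemma 3: conic cycle decomposition of circulations. -/
theorem circulation_conic_cycle_decomposition {N P : ℕ} (hN : 1 ≤ N)
    (t h : Fin P → Fin N) (hth : ∀ ℓ, t ℓ ≠ h ℓ)
    (A : Matrix (Fin P) (Fin N) ℝ)
    (hA : ∀ ℓ k, A ℓ k = if k = t ℓ then 1 else if k = h ℓ then -1 else 0)
    (n : Fin P → ℝ) (hn : A.transpose.mulVec n = 0) :
    ∃ (s : ℕ) (C : Fin s → GraphCycle t h) (lam : Fin s → ℝ),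
      (∀ j, 0 ≤ lam j) ∧
      n = ∑ j, lam j • (C j).ind ∧
      ∀ j j' (ℓ : Fin P), 0 ≤ (C j).ind ℓ * (C j').ind ℓ := by
  classical
  have hcirc : IsCirc t h n := by
    intro k
    have hk : ∑ ℓ, A ℓ k * n ℓ = 0 := by
      have h0 := congrFun hn k
      simpa [Matrix.mulVec, dotProduct, Matrix.transpose_apply] using h0
    have heq : ∀ ℓ, (if k = t ℓ then n ℓ else 0) - (if k = h ℓ then n ℓ else 0)
        = A ℓ k * n ℓ := by
      intro ℓ
      rw [hA ℓ k]
      have h3 := hth ℓ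
      split_ifs with hA1 hA2 hA2
      · exact absurd (hA1 ▸ hA2 : t ℓ = h ℓ) h3
      · ring
      · ring
      · ring
    calc ∑ ℓ, ((if k = t ℓ then n ℓ else 0) - (if k = h ℓ then n ℓ else 0))
        = ∑ ℓ, A ℓ k * n ℓ := Finset.sum_congr rfl fun ℓ _ => heq ℓ
      _ = 0 := hk
  obtain ⟨s, C, lam, hge, hsum, hsgn⟩ := decomp hth _ n le_rfl hcirc
  refine ⟨s, C, lam, hge, hsum, ?_⟩
  intro j j' ℓ
  by_cases h1 : (C j).ind ℓ = 0
  · rw [h1, zero_mul]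
  by_cases h2 : (C j').ind ℓ = 0
  · rw [h2, mul_zero]
  have hp1 := hsgn j ℓ h1
  have hp2 := hsgn j' ℓ h2
  have hnne : n ℓ ≠ 0 := fun hc => by
    rw [hc, mul_zero] at hp1; exact lt_irrefl _ hp1
  nlinarith [mul_pos hp1 hp2, mul_self_pos.mpr hnne]
end

section
/- (Big-M reformulation of the Weymouth equation) Let a > 0 and M > 0, and let φ, ψm, ψn ∈ ℝ satisfy |φ| ≤ M and |ψm − ψn| + a * φ^2 ≤ M. Then the Weymouth equation ψm − ψn = a * Real.sign φ * φ^2 holds if and only if there exists x ∈ ({0, 1} : Set ℝ) satisfying the big-M constraints −M * (1 − x) ≤ φ, φ ≤ M * x, −M * (1 − x) ≤ ψm − ψn − a * φ^2, ψm − ψn + a * φ^2 ≤ M * x, together with the tightness conditions: x = 1 implies ψm − ψn = a * φ^2, and x = 0 implies ψm − ψn = −a * φ^2. -/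
/-- Big-M reformulation of the Weymouth equation for a single lossy pipe. -/
theorem bigM_weymouth_iff (a M φ ψm ψn : ℝ) (ha : 0 < a) (hM : 0 < M)
    (hφ : |φ| ≤ M) (hbound : |ψm - ψn| + a * φ ^ 2 ≤ M) :
    ψm - ψn = a * Real.sign φ * φ ^ 2 ↔
      ∃ x ∈ ({0, 1} : Set ℝ),
        -M * (1 - x) ≤ φ ∧ φ ≤ M * x ∧
        -M * (1 - x) ≤ ψm - ψn - a * φ ^ 2 ∧
        ψm - ψn + a * φ ^ 2 ≤ M * x ∧
        (x = 1 → ψm - ψn = a * φ ^ 2) ∧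
        (x = 0 → ψm - ψn = -(a * φ ^ 2)) := by
  have hφ1 := abs_le.mp hφ
  have hb1 := abs_le.mp (le_trans (le_add_of_nonneg_right
    (by positivity : (0:ℝ) ≤ a * φ ^ 2)) hbound)
  constructor
  · intro h
    rcases lt_trichotomy φ 0 with hlt | heq | hgt
    · refine ⟨0, Or.inl rfl, ?_, ?_, ?_, ?_, ?_, ?_⟩
      · linarith [hφ1.1]
      · simpa using hlt.le
      · rw [Real.sign_of_neg hlt] at h
        have := neg_abs_le (ψm - ψn); have := le_abs_self (ψm - ψn); nlinarith
      · rw [Real.sign_of_neg hlt] at h; nlinarith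
      · intro h1; norm_num at h1
      · intro _; rw [Real.sign_of_neg hlt] at h; linarith
    · subst heq
      refine ⟨1, Or.inr rfl, by norm_num, by simpa using hM.le, ?_, ?_, ?_, ?_⟩
      · simp at h ⊢; linarith
      · simp at h ⊢; linarith
      · intro _; simp at h ⊢; linarith
      · intro h0; norm_num at h0
    · refine ⟨1, Or.inr rfl, by simp; linarith, ?_, ?_, ?_, ?_, ?_⟩
      all_goals rw [Real.sign_of_pos hgt] at h
      · simpa using hφ1.2
      · simp
        have := neg_abs_le (ψm - ψn); have := le_abs_self (ψm - ψn); nlinarith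
      · simp
        have := neg_abs_le (ψm - ψn); have := le_abs_self (ψm - ψn); nlinarith
      · intro _; linarith
      · intro h0; norm_num at h0
  · rintro ⟨x, hx, c1, c2, c3, c4, t1, t0⟩
    rcases hx with rfl | rfl
    · have hψ := t0 rfl
      have hφ0 : φ ≤ 0 := by simpa using c2
      rcases hφ0.lt_or_eq with hlt | heq
      · rw [Real.sign_of_neg hlt]; linarith
      · subst heq; simp at hψ; simp [hψ]
    · have hψ := t1 rfl
      have hφ0 : 0 ≤ φ := by simpa using c1
      rcases hφ0.lt_or_eq with hlt | heq
      · rw [Real.sign_of_pos hlt]; linarith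
      · rw [← heq] at hψ ⊢; simp at hψ; simp [hψ]
end

section
/- (Lemma 1, pressure direction) Suppose the underlying undirected graph of the network is connected and fix a reference node r : Fin N. Let φ : Fin P → ℝ and let ψ, ψ' : Fin N → ℝ both satisfy, with the same flow vector φ, the Weymouth equation ψ (t ℓ) − ψ (h ℓ) = a ℓ * Real.sign (φ ℓ) * (φ ℓ)^2 on every lossy pipe ℓ ∈ L (and likewise for ψ'), and the compressor relation ψ (h ℓ) = α ℓ * ψ (t ℓ) on every ℓ ∉ L (and likewise for ψ'). If ψ r = ψ' r, then ψ = ψ'. -/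
/-- Lemma 1 (pressure direction): on a connected network, the flow vector together
with the pressure at a reference node determines all nodal squared pressures. -/
theorem pressures_determined_by_flows {N P : ℕ} (hN : 1 ≤ N)
    (t h : Fin P → Fin N) (hth : ∀ ℓ, t ℓ ≠ h ℓ)
    (L : Set (Fin P)) (a α : Fin P → ℝ)
    (ha : ∀ ℓ ∈ L, 0 < a ℓ) (hα : ∀ ℓ ∉ L, 0 < α ℓ)
    (hconn : (SimpleGraph.fromRel fun m n => ∃ ℓ, t ℓ = m ∧ h ℓ = n).Connected)
    (r : Fin N) (φ : Fin P → ℝ) (ψ ψ' : Fin N → ℝ)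
    (hwey : ∀ ℓ ∈ L, ψ (t ℓ) - ψ (h ℓ) = a ℓ * Real.sign (φ ℓ) * (φ ℓ) ^ 2)
    (hwey' : ∀ ℓ ∈ L, ψ' (t ℓ) - ψ' (h ℓ) = a ℓ * Real.sign (φ ℓ) * (φ ℓ) ^ 2)
    (hcomp : ∀ ℓ ∉ L, ψ (h ℓ) = α ℓ * ψ (t ℓ))
    (hcomp' : ∀ ℓ ∉ L, ψ' (h ℓ) = α ℓ * ψ' (t ℓ))
    (href : ψ r = ψ' r) :
    ψ = ψ' := by
  -- One adjacency step preserves equality of pressures.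
  have step : ∀ m n, (SimpleGraph.fromRel fun m n => ∃ ℓ, t ℓ = m ∧ h ℓ = n).Adj m n →
      ψ m = ψ' m → ψ n = ψ' n := by
    intro m n hadj hm
    rcases hadj with ⟨hne, hor⟩
    rcases hor with ⟨ℓ, htℓ, hhℓ⟩ | ⟨ℓ, htℓ, hhℓ⟩
    · by_cases hL : ℓ ∈ L
      · have := hwey ℓ hL; have := hwey' ℓ hL
        rw [htℓ, hhℓ] at *
        linarith
      · have h1 := hcomp ℓ hL; have h2 := hcomp' ℓ hL
        rw [htℓ, hhℓ] at *
        rw [h1, h2, hm]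
    · by_cases hL : ℓ ∈ L
      · have := hwey ℓ hL; have := hwey' ℓ hL
        rw [htℓ, hhℓ] at *
        linarith
      · have h1 := hcomp ℓ hL; have h2 := hcomp' ℓ hL
        have hα' := (hα ℓ hL).ne'
        rw [htℓ, hhℓ] at *
        have : α ℓ * ψ n = α ℓ * ψ' n := by rw [← h1, ← h2, hm]
        exact mul_left_cancel₀ hα' this
  funext n
  have hreach := hconn.preconnected r n
  rcases hreach with ⟨w⟩
  induction w with
  | nil => exact href
  | cons hadj _ ih => exact ih (step _ _ hadj href)
end

section
/- (Edges outside all cycles carry no circulation) If n : Fin P → ℝ satisfies Aᵀ.mulVec n = 0 and the edge ℓ : Fin P does not belong to the edge range of any cycle of the multigraph, then n ℓ = 0. -/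
set_option maxHeartbeats 1000000


/-- From a vertex-injective path from `h ℓ` to `t ℓ` avoiding edge `ℓ`,
build a cycle containing `ℓ`. -/
lemma graphCycle_of_path {N P : ℕ} (t h : Fin P → Fin N) (ℓ : Fin P)
    (m : ℕ) (hm2 : 2 ≤ m) (w : Fin m → Fin N) (hw : Function.Injective w)
    (hchain : ∀ i (hi : i < m - 1), ∃ p, p ≠ ℓ ∧
      ((t p = w ⟨i, by omega⟩ ∧ h p = w ⟨i + 1, by omega⟩) ∨
       (t p = w ⟨i + 1, by omega⟩ ∧ h p = w ⟨i, by omega⟩)))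
    (hhead : w ⟨0, by omega⟩ = h ℓ)
    (hlast : w ⟨m - 1, by omega⟩ = t ℓ) :
    ∃ C : GraphCycle t h, ℓ ∈ Set.range C.e := by
  classical
  haveI : NeZero m := ⟨by omega⟩
  haveI : Fact (1 < m) := ⟨by omega⟩
  choose E hE1 hE2 using hchain
  set v : ZMod m → Fin N := fun j => w ⟨j.val, ZMod.val_lt j⟩ with hv_def
  have hv : Function.Injective v := by
    intro j1 j2 hj
    have := hw hj
    exact ZMod.val_injective m (by simpa using congrArg Fin.val this)
  set e : ZMod m → Fin P := fun j =>
    if hj : j.val < m - 1 then E j.val hj else ℓ with he_def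
  have hval_succ : ∀ j : ZMod m, j.val < m - 1 → (j + 1).val = j.val + 1 := by
    intro j hj
    rw [ZMod.val_add, ZMod.val_one]
    exact Nat.mod_eq_of_lt (by omega)
  have hval_last : ∀ j : ZMod m, ¬ j.val < m - 1 → (j + 1).val = 0 := by
    intro j hj
    have hjv : j.val = m - 1 := by have := ZMod.val_lt j; omega
    rw [ZMod.val_add, ZMod.val_one, hjv]
    have : m - 1 + 1 = m := by omega
    rw [this, Nat.mod_self]
  have hvv : ∀ (j : ZMod m) (i : ℕ) (hi : i < m), j.val = i →
      v j = w ⟨i, hi⟩ := by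
    intro j i hi hji
    rw [hv_def]
    exact congrArg w (Fin.ext hji)
  have hspec : ∀ (j : ZMod m) (hj : j.val < m - 1),
      ((t (E j.val hj) = v j ∧ h (E j.val hj) = v (j + 1)) ∨
       (t (E j.val hj) = v (j + 1) ∧ h (E j.val hj) = v j)) := by
    intro j hj
    have h1 : v j = w ⟨j.val, by omega⟩ := hvv j j.val (by omega) rfl
    have h2 : v (j + 1) = w ⟨j.val + 1, by omega⟩ :=
      hvv (j + 1) (j.val + 1) (by omega) (hval_succ j hj)
    rw [h1, h2]
    exact hE2 j.val hj
  have hwinj : ∀ (i1 i2 : ℕ) (h1 : i1 < m) (h2 : i2 < m),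
      w ⟨i1, h1⟩ = w ⟨i2, h2⟩ → i1 = i2 := by
    intro i1 i2 h1 h2 hh
    simpa using congrArg Fin.val (hw hh)
  have hvinj : ∀ (j1 j2 : ZMod m), v j1 = v j2 → j1.val = j2.val := by
    intro j1 j2 hj
    exact congrArg ZMod.val (hv hj)
  have he : Function.Injective e := by
    intro j1 j2 hj
    rw [he_def] at hj
    simp only at hj
    split_ifs at hj with h1 h2 h2
    · obtain hs1 := hspec j1 h1
      obtain hs2 := hspec j2 h2
      rw [hj] at hs1
      have hv1 : (j1 + 1).val = j1.val + 1 := hval_succ j1 h1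
      have hv2 : (j2 + 1).val = j2.val + 1 := hval_succ j2 h2
      rcases hs1 with ⟨ht1, hh1⟩ | ⟨ht1, hh1⟩ <;> rcases hs2 with ⟨ht2, hh2⟩ | ⟨ht2, hh2⟩
      · exact hv (by rw [← ht1, ht2] : v j1 = v j2)
      · have e1 : j1.val = (j2 + 1).val := hvinj _ _ (by rw [← ht1, ht2])
        have e2 : (j1 + 1).val = j2.val := hvinj _ _ (by rw [← hh1, hh2])
        omega
      · have e1 : j1.val = (j2 + 1).val := hvinj _ _ (by rw [← hh1, hh2])
        have e2 : (j1 + 1).val = j2.val := hvinj _ _ (by rw [← ht1, ht2])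
        omega
      · exact hv (by rw [← hh1, hh2] : v j1 = v j2)
    · exact absurd hj (hE1 j1.val h1)
    · exact absurd hj.symm (hE1 j2.val h2)
    · have v1 : j1.val = m - 1 := by have := ZMod.val_lt j1; omega
      have v2 : j2.val = m - 1 := by have := ZMod.val_lt j2; omega
      exact ZMod.val_injective m (v1.trans v2.symm)
  have hedge : ∀ j : ZMod m,
      (t (e j), h (e j)) = (v j, v (j + 1)) ∨ (t (e j), h (e j)) = (v (j + 1), v j) := by
    intro j
    rw [he_def]
    simp only
    split_ifs with hj
    · rcases hspec j hj with ⟨h1, h2⟩ | ⟨h1, h2⟩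
      · exact Or.inl (by rw [h1, h2])
      · exact Or.inr (by rw [h1, h2])
    · left
      have hjv : j.val = m - 1 := by have := ZMod.val_lt j; omega
      have hvj : v j = t ℓ := by rw [hvv j (m - 1) (by omega) hjv]; exact hlast
      have hvj1 : v (j + 1) = h ℓ := by
        rw [hvv (j + 1) 0 (by omega) (hval_last j (by omega))]; exact hhead
      rw [hvj, hvj1]
  refine ⟨⟨m, hm2, v, e, hv, he, hedge⟩, ⟨((m - 1 : ℕ) : ZMod m), ?_⟩⟩
  show e _ = ℓ
  rw [he_def]
  simp only
  rw [dif_neg]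
  rw [ZMod.val_natCast_of_lt (by omega)]
  omega

/-- Edges outside all cycles carry no circulation. -/
theorem no_circulation_outside_cycles {N P : ℕ} (hN : 1 ≤ N)
    (t h : Fin P → Fin N) (hth : ∀ ℓ, t ℓ ≠ h ℓ)
    (A : Matrix (Fin P) (Fin N) ℝ)
    (hA : ∀ ℓ k, A ℓ k = if k = t ℓ then 1 else if k = h ℓ then -1 else 0)
    (n : Fin P → ℝ) (hn : A.transpose.mulVec n = 0)
    (ℓ : Fin P) (hℓ : ∀ C : GraphCycle t h, ℓ ∉ Set.range C.e) :
    n ℓ = 0 := by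
  classical
  set R : Fin N → Fin N → Prop := fun a b => ∃ p, p ≠ ℓ ∧
    ((t p = a ∧ h p = b) ∨ (t p = b ∧ h p = a)) with hR
  let G : SimpleGraph (Fin N) :=
    { Adj := fun a b => a ≠ b ∧ R a b
      symm := ⟨by
        rintro a b ⟨hab, p, hp, hor⟩
        exact ⟨hab.symm, p, hp, hor.symm⟩⟩
      loopless := ⟨fun a ha => ha.1 rfl⟩ }
  -- t ℓ is not reachable from h ℓ avoiding ℓ
  have hnr : ¬ G.Reachable (h ℓ) (t ℓ) := by
    intro hr
    obtain ⟨q⟩ := hr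
    set p := q.toPath with hp
    set L := (p : G.Walk (h ℓ) (t ℓ)).support with hL
    have hnd : L.Nodup := p.2.support_nodup
    have hlen : 2 ≤ L.length := by
      have h1 : L.length = (p : G.Walk (h ℓ) (t ℓ)).length + 1 :=
        SimpleGraph.Walk.length_support _
      have h2 : (p : G.Walk (h ℓ) (t ℓ)).length ≠ 0 := by
        intro h0
        exact (hth ℓ).symm (SimpleGraph.Walk.eq_of_length_eq_zero h0)
      omega
    have hchain : L.IsChain (fun a b => ∃ p, p ≠ ℓ ∧
        ((t p = a ∧ h p = b) ∨ (t p = b ∧ h p = a))) := by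
      have := SimpleGraph.Walk.isChain_adj_support (p : G.Walk (h ℓ) (t ℓ))
      exact this.imp (fun a b hab => hab.2)
    have hhead : L.get ⟨0, by omega⟩ = h ℓ := by
      have := SimpleGraph.Walk.head_support (p : G.Walk (h ℓ) (t ℓ))
      rw [← this, List.head_eq_getElem_zero, List.get_eq_getElem]
    have hlast : L.get ⟨L.length - 1, by omega⟩ = t ℓ := by
      have := SimpleGraph.Walk.getLast_support (p : G.Walk (h ℓ) (t ℓ))
      rw [← this, List.getLast_eq_getElem, List.get_eq_getElem]
    have hchain' : ∀ i (hi : i < L.length - 1), ∃ p', p' ≠ ℓ ∧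
        ((t p' = L.get ⟨i, by omega⟩ ∧ h p' = L.get ⟨i + 1, by omega⟩) ∨
         (t p' = L.get ⟨i + 1, by omega⟩ ∧ h p' = L.get ⟨i, by omega⟩)) :=
      fun i hi => List.isChain_iff_getElem.1 hchain i (by omega)
    obtain ⟨C, hC⟩ := graphCycle_of_path t h ℓ L.length hlen L.get
      (List.nodup_iff_injective_get.1 hnd) hchain' hhead hlast
    exact hℓ C hC
  -- the cut
  set S : Finset (Fin N) := Finset.univ.filter (fun k => G.Reachable (h ℓ) k) with hS
  have hhS : h ℓ ∈ S := by
    simp only [hS, Finset.mem_filter, Finset.mem_univ, true_and]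
    exact SimpleGraph.Reachable.refl _
  have htS : t ℓ ∉ S := by simp [hS, hnr]
  -- edges other than ℓ do not cross the cut
  have hcross : ∀ p : Fin P, p ≠ ℓ → (t p ∈ S ↔ h p ∈ S) := by
    intro p hp
    have hadj : G.Adj (t p) (h p) := ⟨hth p, p, hp, Or.inl ⟨rfl, rfl⟩⟩
    simp only [hS, Finset.mem_filter, Finset.mem_univ, true_and]
    exact ⟨fun hr => hr.trans hadj.reachable, fun hr => hr.trans hadj.symm.reachable⟩
  -- compute cut coefficient
  have hcoef : ∀ p : Fin P, (∑ k ∈ S, A p k) =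
      (if t p ∈ S then (1 : ℝ) else 0) + (if h p ∈ S then (-1 : ℝ) else 0) := by
    intro p
    have hsplit : ∀ k, A p k =
        (if k = t p then (1 : ℝ) else 0) + (if k = h p then (-1 : ℝ) else 0) := by
      intro k
      rw [hA]
      split_ifs with h1 h2 h2 <;>
        first
          | exact absurd (h1.symm.trans h2) (hth p)
          | ring
    simp only [hsplit]
    rw [Finset.sum_add_distrib, Finset.sum_ite_eq' S (t p) (fun _ => (1:ℝ)),
      Finset.sum_ite_eq' S (h p) (fun _ => (-1:ℝ))]
  -- sum the conservation laws over S
  have h0 : (∑ p : Fin P, (∑ k ∈ S, A p k) * n p) = 0 := by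
    have : (∑ k ∈ S, A.transpose.mulVec n k) = 0 := by
      rw [hn]; simp
    rw [← this]
    simp only [Matrix.mulVec, Matrix.transpose_apply, dotProduct]
    rw [Finset.sum_comm]
    congr 1
    ext p
    rw [Finset.sum_mul]
  have hfinal : (∑ p : Fin P, (∑ k ∈ S, A p k) * n p) = - n ℓ := by
    rw [Finset.sum_eq_single ℓ]
    · rw [hcoef ℓ, if_neg htS, if_pos hhS]; ring
    · intro p _ hp
      rw [hcoef p]
      by_cases h1 : t p ∈ S
      · rw [if_pos h1, if_pos ((hcross p hp).1 h1)]; ring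
      · rw [if_neg h1, if_neg (fun h2 => h1 ((hcross p hp).2 h2))]; ring
    · intro hmem
      exact absurd (Finset.mem_univ ℓ) hmem
  rw [hfinal] at h0
  linarith
end

section
/- (Key step of the exactness proof: strict decrease of the objective around a cycle) Let m ≥ 2, let a : ZMod m → ℝ with a i > 0, and let τ : ZMod m → ℝ with τ i ∈ {1, −1} for every i (edge i joins nodes i and i+1 and is directed from i to i+1 if τ i = 1, from i+1 to i if τ i = −1). Let p, p̃, f, f̃ : ZMod m → ℝ and λ > 0 satisfy: (i) f i ≥ 0 and τ i * (p i − p (i+1)) = a i * (f i)^2 for every i (exact Weymouth equalities); (ii) f̃ i = f i + λ * τ i for every i; (iii) for every i, either (f̃ i ≥ 0 and τ i * (p̃ i − p̃ (i+1)) ≥ a i * (f̃ i)^2) or (f̃ i ≤ 0 and τ i * (p̃ i − p̃ (i+1)) ≤ −(a i) * (f̃ i)^2) (relaxed Weymouth inequalities). Then Σ_{i : ZMod m} |p i − p (i+1)| < Σ_{i : ZMod m} |p̃ i − p̃ (i+1)|. -/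
/-- Key step of the exactness proof: strict decrease of the objective around a
cycle of lossy pipes. Edge `i` joins nodes `i` and `i+1` of `ZMod m` and is
directed according to `τ i ∈ {1, −1}`. -/
theorem cycle_objective_strict_decrease (m : ℕ) (hm : 2 ≤ m)
    (a τ : ZMod m → ℝ) (ha : ∀ i, 0 < a i) (hτ : ∀ i, τ i = 1 ∨ τ i = -1)
    (p p' f f' : ZMod m → ℝ) (lam : ℝ) (hlam : 0 < lam)
    (hexact : ∀ i, 0 ≤ f i ∧ τ i * (p i - p (i + 1)) = a i * (f i) ^ 2)
    (hshift : ∀ i, f' i = f i + lam * τ i)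
    (hrelax : ∀ i,
      (0 ≤ f' i ∧ a i * (f' i) ^ 2 ≤ τ i * (p' i - p' (i + 1))) ∨
      (f' i ≤ 0 ∧ τ i * (p' i - p' (i + 1)) ≤ -(a i) * (f' i) ^ 2)) :
    haveI : NeZero m := ⟨by omega⟩
    ∑ i : ZMod m, |p i - p (i + 1)| < ∑ i : ZMod m, |p' i - p' (i + 1)| := by
  haveI : NeZero m := ⟨by omega⟩
  set g : ZMod m → ℝ := fun i => τ i * f i with hgdef
  set h' : ZMod m → ℝ := fun i => a i * (|g i + lam| * (g i + lam)) with hh'def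
  have hτsq : ∀ i, τ i * τ i = 1 := fun i => by rcases hτ i with h | h <;> simp [h]
  have hτabs : ∀ i, |τ i| = 1 := fun i => by rcases hτ i with h | h <;> simp [h]
  have htele : ∀ q : ZMod m → ℝ, ∑ i : ZMod m, (q i - q (i + 1)) = 0 := by
    intro q
    have h1 : ∑ i : ZMod m, q (i + 1) = ∑ i : ZMod m, q i :=
      Fintype.sum_equiv (Equiv.addRight (1 : ZMod m)) _ _ (fun i => rfl)
    rw [Finset.sum_sub_distrib, h1, sub_self]
  have hgabs : ∀ i, |g i| = f i := by
    intro i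
    simp only [hgdef]
    rw [abs_mul, hτabs i, one_mul, abs_of_nonneg (hexact i).1]
  have hD : ∀ i, p i - p (i + 1) = a i * (|g i| * g i) := by
    intro i
    have h3 := hτsq i
    calc p i - p (i + 1) = τ i * (τ i * (p i - p (i + 1))) := by
          rw [← mul_assoc, h3, one_mul]
      _ = τ i * (a i * f i ^ 2) := by rw [(hexact i).2]
      _ = a i * (|g i| * g i) := by rw [hgabs i]; simp only [hgdef]; ring
  have hgf' : ∀ i, g i + lam = τ i * f' i := by
    intro i
    simp only [hgdef]
    rw [hshift i]
    linear_combination (-lam) * hτsq i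
  -- the relaxed Weymouth conditions: h' i lies between 0 and p' i - p' (i+1)
  have hbetween : ∀ i, (0 ≤ h' i ∧ h' i ≤ p' i - p' (i + 1)) ∨
      (p' i - p' (i + 1) ≤ h' i ∧ h' i ≤ 0) := by
    intro i
    have hgf := hgf' i
    have hai := ha i
    rcases hrelax i with ⟨hf0, hw⟩ | ⟨hf0, hw⟩
    · have habs : |g i + lam| = f' i := by
        rw [hgf, abs_mul, hτabs i, one_mul, abs_of_nonneg hf0]
      have hh : h' i = a i * (f' i * (τ i * f' i)) := by
        simp only [hh'def]; rw [habs, hgf]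
      rcases hτ i with ht | ht
      · left
        constructor <;> rw [ht] at hw hh <;>
          nlinarith [hh, hw, mul_nonneg (ha i).le (sq_nonneg (f' i))]
      · right
        constructor <;> rw [ht] at hw hh <;>
          nlinarith [hh, hw, mul_nonneg (ha i).le (sq_nonneg (f' i))]
    · have habs : |g i + lam| = -f' i := by
        rw [hgf, abs_mul, hτabs i, one_mul, abs_of_nonpos hf0]
      have hh : h' i = a i * (-f' i * (τ i * f' i)) := by
        simp only [hh'def]; rw [habs, hgf]
      rcases hτ i with ht | ht
      · right
        constructor <;> rw [ht] at hw hh <;>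
          nlinarith [hh, hw, mul_nonneg (ha i).le (sq_nonneg (f' i))]
      · left
        constructor <;> rw [ht] at hw hh <;>
          nlinarith [hh, hw, mul_nonneg (ha i).le (sq_nonneg (f' i))]
  -- strict monotonicity: p i - p (i+1) = a |g| g < h'
  have hmono : ∀ i, a i * (|g i| * g i) < h' i := by
    intro i
    have hai := ha i
    simp only [hh'def]
    rcases le_or_gt 0 (g i) with hg | hg
    · rw [abs_of_nonneg hg, abs_of_nonneg (by linarith : (0:ℝ) ≤ g i + lam)]
      nlinarith [mul_nonneg (mul_nonneg hai.le hg) hlam.le,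
        mul_pos (mul_pos hai hlam) hlam]
    · rw [abs_of_neg hg]
      rcases le_or_gt 0 (g i + lam) with hgl | hgl
      · rw [abs_of_nonneg hgl]
        nlinarith [mul_pos hai (mul_pos_of_neg_of_neg hg hg),
          mul_nonneg (mul_nonneg hai.le hgl) hgl]
      · rw [abs_of_neg hgl]
        nlinarith [mul_pos (mul_pos hai hlam) hlam,
          mul_pos (mul_pos hai hlam) (neg_pos.mpr hgl)]
  have hsum0 : ∑ i : ZMod m, (p i - p (i + 1)) = 0 := htele p
  have hsum0' : ∑ i : ZMod m, (p' i - p' (i + 1)) = 0 := htele p'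
  have hsumh'pos : 0 < ∑ i : ZMod m, h' i := by
    have h1 : ∑ i : ZMod m, (p i - p (i + 1)) < ∑ i : ZMod m, h' i :=
      Finset.sum_lt_sum_of_nonempty Finset.univ_nonempty
        (fun i _ => by rw [hD i]; exact hmono i)
    linarith
  have habs' : ∀ i, |p' i - p' (i + 1)| = |(p' i - p' (i + 1)) - h' i| + |h' i| := by
    intro i
    rcases hbetween i with ⟨h1, h2⟩ | ⟨h1, h2⟩
    · rw [abs_of_nonneg (le_trans h1 h2), abs_of_nonneg (by linarith), abs_of_nonneg h1]
      ring
    · rw [abs_of_nonpos (le_trans h1 h2), abs_of_nonpos (by linarith), abs_of_nonpos h2]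
      ring
  have key : ∑ i : ZMod m, h' i + ∑ i : ZMod m, |h' i| ≤
      ∑ i : ZMod m, |p' i - p' (i + 1)| := by
    have h1 : ∑ i : ZMod m, |p' i - p' (i + 1)| =
        ∑ i : ZMod m, |(p' i - p' (i + 1)) - h' i| + ∑ i : ZMod m, |h' i| := by
      rw [← Finset.sum_add_distrib]
      exact Finset.sum_congr rfl (fun i _ => habs' i)
    have h3 : ∑ i : ZMod m, ((p' i - p' (i + 1)) - h' i) = - ∑ i : ZMod m, h' i := by
      rw [Finset.sum_sub_distrib, hsum0', zero_sub]
    have h4 : ∑ i : ZMod m, h' i ≤ ∑ i : ZMod m, |(p' i - p' (i + 1)) - h' i| := by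
      have h5 := Finset.abs_sum_le_sum_abs
        (fun i => (p' i - p' (i + 1)) - h' i) (Finset.univ : Finset (ZMod m))
      rw [h3, abs_neg, abs_of_pos hsumh'pos] at h5
      exact h5
    linarith
  -- |p i - p(i+1)| = a i * g i ^ 2
  have hDabs : ∀ i, |p i - p (i + 1)| = a i * g i ^ 2 := by
    intro i
    have habs2 : |(|g i| * g i)| = g i ^ 2 := by
      rcases le_or_gt 0 (g i) with h | h
      · rw [abs_of_nonneg h, abs_of_nonneg (mul_self_nonneg _), pow_two]
      · rw [abs_of_neg h,
          abs_of_nonpos (by nlinarith [mul_pos_of_neg_of_neg h h] : -g i * g i ≤ 0)]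
        ring
    rw [hD i, abs_mul, abs_of_pos (ha i), habs2]
  set S : Finset (ZMod m) := Finset.univ.filter (fun i => 0 ≤ g i) with hSdef
  have hSsplit : ∀ (q : ZMod m → ℝ),
      ∑ i : ZMod m, q i =
        ∑ i ∈ S, q i + ∑ i ∈ Finset.univ.filter (fun i => ¬ 0 ≤ g i), q i :=
    fun q => (Finset.sum_filter_add_sum_filter_not _ _ _).symm
  have hbal : ∑ i ∈ S, a i * g i ^ 2 =
      ∑ i ∈ Finset.univ.filter (fun i => ¬ 0 ≤ g i), a i * g i ^ 2 := by
    have h0 : ∑ i : ZMod m, a i * (|g i| * g i) = 0 := by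
      rw [← Finset.sum_congr rfl (fun i _ => hD i), hsum0]
    rw [hSsplit (fun i => a i * (|g i| * g i))] at h0
    have hA : ∑ i ∈ S, a i * (|g i| * g i) = ∑ i ∈ S, a i * g i ^ 2 :=
      Finset.sum_congr rfl (fun i hi => by
        have : 0 ≤ g i := (Finset.mem_filter.mp hi).2
        rw [abs_of_nonneg this]; ring)
    have hB : ∑ i ∈ Finset.univ.filter (fun i => ¬ 0 ≤ g i), a i * (|g i| * g i) =
        - ∑ i ∈ Finset.univ.filter (fun i => ¬ 0 ≤ g i), a i * g i ^ 2 := by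
      rw [← Finset.sum_neg_distrib]
      exact Finset.sum_congr rfl (fun i hi => by
        have hgi : g i < 0 := lt_of_not_ge (Finset.mem_filter.mp hi).2
        rw [abs_of_neg hgi]; ring)
    rw [hA, hB] at h0
    linarith
  have hSne : S.Nonempty := by
    by_contra hc
    rw [Finset.not_nonempty_iff_eq_empty, Finset.filter_eq_empty_iff] at hc
    have hneg : ∀ i : ZMod m, g i < 0 := fun i => lt_of_not_ge (hc (Finset.mem_univ i))
    have h1 : ∑ i : ZMod m, (p i - p (i + 1)) < ∑ i : ZMod m, (0 : ℝ) :=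
      Finset.sum_lt_sum_of_nonempty Finset.univ_nonempty (fun i _ => by
        rw [hD i, abs_of_neg (hneg i)]
        nlinarith [ha i, hneg i, mul_pos_of_neg_of_neg (hneg i) (hneg i)])
    rw [Finset.sum_const, smul_zero] at h1
    linarith
  -- final chain
  have hLHS : ∑ i : ZMod m, |p i - p (i + 1)| = 2 * ∑ i ∈ S, a i * g i ^ 2 := by
    rw [Finset.sum_congr rfl (fun i _ => hDabs i), hSsplit (fun i => a i * g i ^ 2), ← hbal]
    ring
  have hstep1 : ∑ i ∈ S, a i * g i ^ 2 < ∑ i ∈ S, a i * (g i + lam) ^ 2 :=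
    Finset.sum_lt_sum_of_nonempty hSne (fun i hi => by
      have hgi : 0 ≤ g i := (Finset.mem_filter.mp hi).2
      nlinarith [mul_nonneg (mul_nonneg (ha i).le hgi) hlam.le,
        mul_pos (mul_pos (ha i) hlam) hlam])
  have hstep2 : ∑ i ∈ S, 2 * (a i * (g i + lam) ^ 2) ≤ ∑ i : ZMod m, (h' i + |h' i|) := by
    have hsub : ∑ i ∈ S, (h' i + |h' i|) ≤ ∑ i : ZMod m, (h' i + |h' i|) :=
      Finset.sum_le_sum_of_subset_of_nonneg (Finset.subset_univ S)
        (fun i _ _ => by linarith [neg_abs_le (h' i), abs_nonneg (h' i)])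
    have heq : ∑ i ∈ S, 2 * (a i * (g i + lam) ^ 2) = ∑ i ∈ S, (h' i + |h' i|) :=
      Finset.sum_congr rfl (fun i hi => by
        have hgi : 0 ≤ g i := (Finset.mem_filter.mp hi).2
        have hpos : 0 < g i + lam := by linarith
        have hh : h' i = a i * (g i + lam) ^ 2 := by
          simp only [hh'def]; rw [abs_of_pos hpos]; ring
        rw [hh, abs_of_nonneg (mul_nonneg (ha i).le (sq_nonneg _))]
        ring)
    linarith
  have hsplit2 : ∑ i : ZMod m, (h' i + |h' i|) = ∑ i : ZMod m, h' i + ∑ i : ZMod m, |h' i| :=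
    Finset.sum_add_distrib
  calc ∑ i : ZMod m, |p i - p (i + 1)| = 2 * ∑ i ∈ S, a i * g i ^ 2 := hLHS
    _ < 2 * ∑ i ∈ S, a i * (g i + lam) ^ 2 := by linarith
    _ = ∑ i ∈ S, 2 * (a i * (g i + lam) ^ 2) := by rw [Finset.mul_sum]
    _ ≤ ∑ i : ZMod m, (h' i + |h' i|) := hstep2
    _ = ∑ i : ZMod m, h' i + ∑ i : ZMod m, |h' i| := hsplit2
    _ ≤ ∑ i : ZMod m, |p' i - p' (i + 1)| := key
end
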